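/- arXiv:1503.01936 — 6 statements merged into one kernel-verified Lean document; each statement's English description precedes it below -/
import Mathlib

section
/- Let 𝒫 be a partition of Ω, let P̲ be a W-coherent lower probability on 𝒜_C(𝒫), and let C|D be a conditional event with C ∩ D ≠ ∅, Cᶜ ∩ D ≠ ∅ and C|D ∉ 𝒜_C(𝒫). Then the extension U̲ of P̲ to 𝒜_C(𝒫) ∪ {C|D} defined by U̲(C|D) = P̲((C|D)^*) (the upper GN-extension) is a W-coherent lower probability, and every W-coherent lower probability Q̲ on 𝒜_C(𝒫) ∪ {C|D} agreeing with P̲ on 𝒜_C(𝒫) satisfies Q̲(C|D) ≤ U̲(C|D); thus U̲ is the upper extension of P̲. -/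
open Set

/-- Real-valued indicator function of a set. -/
noncomputable def ind {Ω : Type*} (B : Set Ω) : Ω → ℝ := B.indicator 1

/-- A bounded gamble. -/
def Bdd {Ω : Type*} (X : Ω → ℝ) : Prop := BddAbove (Set.range X) ∧ BddBelow (Set.range X)

/-- `S` is a set of conditional gambles: each pair has nonempty conditioning event and
bounded gamble. -/
def IsCondGambleSet {Ω : Type*} (S : Set ((Ω → ℝ) × Set Ω)) : Prop :=
  ∀ p ∈ S, p.2.Nonempty ∧ Bdd p.1

/-- `S` is a set of conditional events: each member is an indicator gamble conditional on a
nonempty event. -/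
def IsCondEventSet {Ω : Type*} (S : Set ((Ω → ℝ) × Set Ω)) : Prop :=
  ∀ p ∈ S, ∃ A B : Set Ω, B.Nonempty ∧ p = (ind A, B)

/-- The term `1_B · (X − P(X|B))` appearing in betting gains. -/
noncomputable def gainTerm {Ω : Type*} (P : (Ω → ℝ) × Set Ω → ℝ) (X : Ω → ℝ) (B : Set Ω) :
    Ω → ℝ :=
  B.indicator (fun ω => X ω - P (X, B))

/-- Convex conditional lower prevision on `S`. -/
def IsConvexLP {Ω : Type*} (S : Set ((Ω → ℝ) × Set Ω)) (P : (Ω → ℝ) × Set Ω → ℝ) : Prop :=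
  ∀ n : ℕ, 1 ≤ n → ∀ (X0 : Ω → ℝ) (B0 : Set Ω) (X : Fin n → Ω → ℝ) (Bs : Fin n → Set Ω)
    (s0 : ℝ) (s : Fin n → ℝ),
    (X0, B0) ∈ S → (∀ i, (X i, Bs i) ∈ S) → (∀ i, 0 ≤ s i) → (∑ i, s i) = s0 → 0 < s0 →
    0 ≤ sSup ((fun ω => (∑ i, s i * gainTerm P (X i) (Bs i) ω) - s0 * gainTerm P X0 B0 ω)
        '' (B0 ∪ ⋃ i, Bs i))

/-- Centered convex (C-convex) conditional lower prevision on `S`. -/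
def IsCConvexLP {Ω : Type*} (S : Set ((Ω → ℝ) × Set Ω)) (P : (Ω → ℝ) × Set Ω → ℝ) : Prop :=
  IsConvexLP S P ∧
    ∀ (X : Ω → ℝ) (B : Set Ω), (X, B) ∈ S →
      ((fun _ => (0 : ℝ)), B) ∈ S ∧ P ((fun _ => (0 : ℝ)), B) = 0

/-- 1-convex conditional lower prevision on `S`. -/
def Is1ConvexLP {Ω : Type*} (S : Set ((Ω → ℝ) × Set Ω)) (P : (Ω → ℝ) × Set Ω → ℝ) : Prop :=
  ∀ (X0 X1 : Ω → ℝ) (B0 B1 : Set Ω) (t : ℝ),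
    (X0, B0) ∈ S → (X1, B1) ∈ S → 0 < t →
    0 ≤ sSup ((fun ω => t * gainTerm P X1 B1 ω - t * gainTerm P X0 B0 ω) '' (B0 ∪ B1))

/-- Centered 1-convex conditional lower prevision on `S`. -/
def IsC1ConvexLP {Ω : Type*} (S : Set ((Ω → ℝ) × Set Ω)) (P : (Ω → ℝ) × Set Ω → ℝ) : Prop :=
  Is1ConvexLP S P ∧
    ∀ (X : Ω → ℝ) (B : Set Ω), (X, B) ∈ S →
      ((fun _ => (0 : ℝ)), B) ∈ S ∧ P ((fun _ => (0 : ℝ)), B) = 0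

/-- Williams-coherent conditional lower prevision on `S`. -/
def IsWCoherent {Ω : Type*} (S : Set ((Ω → ℝ) × Set Ω)) (P : (Ω → ℝ) × Set Ω → ℝ) : Prop :=
  ∀ (n : ℕ) (X0 : Ω → ℝ) (B0 : Set Ω) (X : Fin n → Ω → ℝ) (Bs : Fin n → Set Ω)
    (s0 : ℝ) (s : Fin n → ℝ),
    (X0, B0) ∈ S → (∀ i, (X i, Bs i) ∈ S) → 0 ≤ s0 → (∀ i, 0 ≤ s i) →
    0 ≤ sSup ((fun ω => (∑ i, s i * gainTerm P (X i) (Bs i) ω) - s0 * gainTerm P X0 B0 ω)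
        '' (B0 ∪ ⋃ i, Bs i))

/-- de Finetti-coherent conditional prevision on `S`. -/
def IsdFCoherent {Ω : Type*} (S : Set ((Ω → ℝ) × Set Ω)) (P : (Ω → ℝ) × Set Ω → ℝ) : Prop :=
  ∀ (n : ℕ), 1 ≤ n → ∀ (X : Fin n → Ω → ℝ) (Bs : Fin n → Set Ω) (s : Fin n → ℝ),
    (∀ i, (X i, Bs i) ∈ S) →
    0 ≤ sSup ((fun ω => ∑ i, s i * gainTerm P (X i) (Bs i) ω) '' (⋃ i, Bs i))

/-- Goodman–Nguyen relation on conditional events: `A|B ≤GN C|D`. -/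
def GNe {Ω : Type*} (A B C D : Set Ω) : Prop :=
  A ∩ B ⊆ C ∩ D ∧ Cᶜ ∩ D ⊆ Aᶜ ∩ B

/-- Goodman–Nguyen relation on conditional gambles: `X|B ≤GN Y|D`. -/
def GNg {Ω : Type*} (X : Ω → ℝ) (B : Set Ω) (Y : Ω → ℝ) (D : Set Ω) : Prop :=
  ∀ ω : Ω, ind B ω * X ω + ind (Bᶜ ∩ D) ω * sSup (X '' B)
    ≤ ind D ω * Y ω + ind (B ∩ Dᶜ) ω * sInf (Y '' D)

/-- `pt` is a partition of `Ω`. -/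
def IsPartition {Ω : Type*} (pt : Set (Set Ω)) : Prop :=
  (∀ e ∈ pt, e.Nonempty) ∧ (∀ e ∈ pt, ∀ f ∈ pt, e ≠ f → e ∩ f = ∅) ∧ ⋃₀ pt = Set.univ

/-- `E` is logically dependent on the partition `pt` (a union of its atoms). -/
def memA {Ω : Type*} (pt : Set (Set Ω)) (E : Set Ω) : Prop := ∃ T ⊆ pt, E = ⋃₀ T

/-- Inner event `E_*` w.r.t. partition `pt`. -/
def innerE {Ω : Type*} (pt : Set (Set Ω)) (E : Set Ω) : Set Ω := ⋃₀ {e ∈ pt | e ⊆ E}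

/-- Outer event `E^*` w.r.t. partition `pt`. -/
def outerE {Ω : Type*} (pt : Set (Set Ω)) (E : Set Ω) : Set Ω := ⋃₀ {e ∈ pt | (e ∩ E).Nonempty}

/-- `𝒜_C(pt)`, as a set of conditional (indicator) gambles. -/
def AC {Ω : Type*} (pt : Set (Set Ω)) : Set ((Ω → ℝ) × Set Ω) :=
  {p | ∃ A B : Set Ω, memA pt A ∧ memA pt B ∧ B.Nonempty ∧ p = (ind A, B)}

/-- The inner conditional event `(C|D)_*`, as a conditional indicator gamble. -/
noncomputable def innerCE {Ω : Type*} (pt : Set (Set Ω)) (C D : Set Ω) : (Ω → ℝ) × Set Ω :=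
  (ind (innerE pt (C ∩ D)), innerE pt (C ∩ D) ∪ outerE pt (Cᶜ ∩ D))

/-- The outer conditional event `(C|D)^*`, as a conditional indicator gamble. -/
noncomputable def outerCE {Ω : Type*} (pt : Set (Set Ω)) (C D : Set Ω) : (Ω → ℝ) × Set Ω :=
  (ind (outerE pt (C ∩ D)), outerE pt (C ∩ D) ∪ innerE pt (Cᶜ ∩ D))


section Aux

attribute [local instance] Classical.propDecidable

variable {Ω : Type*}

lemma ind_apply (A : Set Ω) (ω : Ω) : ind A ω = if ω ∈ A then 1 else 0 := by
  simp [ind, Set.indicator_apply]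

lemma gainTerm_apply (P : (Ω → ℝ) × Set Ω → ℝ) (X : Ω → ℝ) (B : Set Ω) (ω : Ω) :
    gainTerm P X B ω = if ω ∈ B then X ω - P (X, B) else 0 := Set.indicator_apply _ _ _

lemma abs_gainTerm_le (P : (Ω → ℝ) × Set Ω → ℝ) (A B : Set Ω) (ω : Ω) :
    |gainTerm P (ind A) B ω| ≤ 1 + |P (ind A, B)| := by
  rw [gainTerm_apply]
  split
  · refine le_trans (abs_sub _ _) ?_
    have : |ind A ω| ≤ 1 := by rw [ind_apply]; split <;> norm_num
    linarith
  · simp; positivity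

lemma atom_eq {pt : Set (Set Ω)} (hpt : IsPartition pt) {e f : Set Ω} (he : e ∈ pt)
    (hf : f ∈ pt) {ω : Ω} (h1 : ω ∈ e) (h2 : ω ∈ f) : e = f := by
  by_contra hne
  have h := hpt.2.1 e he f hf hne
  have : ω ∈ e ∩ f := ⟨h1, h2⟩
  rw [h] at this
  exact this

lemma exists_atom {pt : Set (Set Ω)} (hpt : IsPartition pt) (ω : Ω) : ∃ e ∈ pt, ω ∈ e := by
  have : ω ∈ ⋃₀ pt := by rw [hpt.2.2]; trivial
  exact this

lemma memA_mem_iff {pt : Set (Set Ω)} (hpt : IsPartition pt) {A : Set Ω} (hA : memA pt A)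
    {e : Set Ω} (he : e ∈ pt) {ω ω' : Ω} (h1 : ω ∈ e) (h2 : ω' ∈ e) : ω ∈ A ↔ ω' ∈ A := by
  obtain ⟨T, hT, rfl⟩ := hA
  constructor
  · rintro ⟨f, hfT, hωf⟩
    have hef : e = f := atom_eq hpt he (hT hfT) h1 hωf
    exact ⟨f, hfT, hef ▸ h2⟩
  · rintro ⟨f, hfT, hωf⟩
    have hef : e = f := atom_eq hpt he (hT hfT) h2 hωf
    exact ⟨f, hfT, hef ▸ h1⟩

lemma mem_outerE_iff {pt : Set (Set Ω)} (hpt : IsPartition pt) (E : Set Ω) {e : Set Ω}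
    (he : e ∈ pt) {ω : Ω} (hω : ω ∈ e) : ω ∈ outerE pt E ↔ (e ∩ E).Nonempty := by
  constructor
  · rintro ⟨f, ⟨hf, hfE⟩, hωf⟩
    have : e = f := atom_eq hpt he hf hω hωf
    rw [this]; exact hfE
  · intro h; exact ⟨e, ⟨he, h⟩, hω⟩

lemma mem_innerE_iff {pt : Set (Set Ω)} (hpt : IsPartition pt) (E : Set Ω) {e : Set Ω}
    (he : e ∈ pt) {ω : Ω} (hω : ω ∈ e) : ω ∈ innerE pt E ↔ e ⊆ E := by
  constructor
  · rintro ⟨f, ⟨hf, hfE⟩, hωf⟩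
    have : e = f := atom_eq hpt he hf hω hωf
    rw [this]; exact hfE
  · intro h; exact ⟨e, ⟨he, h⟩, hω⟩

lemma memA_outerE (pt : Set (Set Ω)) (E : Set Ω) : memA pt (outerE pt E) :=
  ⟨{e ∈ pt | (e ∩ E).Nonempty}, fun _ h => h.1, rfl⟩

lemma memA_innerE (pt : Set (Set Ω)) (E : Set Ω) : memA pt (innerE pt E) :=
  ⟨{e ∈ pt | e ⊆ E}, fun _ h => h.1, rfl⟩

lemma memA_union {pt : Set (Set Ω)} {A B : Set Ω} (hA : memA pt A) (hB : memA pt B) :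
    memA pt (A ∪ B) := by
  obtain ⟨T, hT, rfl⟩ := hA
  obtain ⟨S, hS, rfl⟩ := hB
  exact ⟨T ∪ S, Set.union_subset hT hS, (Set.sUnion_union T S).symm⟩

lemma innerE_subset (pt : Set (Set Ω)) (E : Set Ω) : innerE pt E ⊆ E := by
  rintro ω ⟨f, ⟨hf, hfE⟩, hωf⟩
  exact hfE hωf

lemma subset_outerE {pt : Set (Set Ω)} (hpt : IsPartition pt) (E : Set Ω) :
    E ⊆ outerE pt E := by
  intro ω hω
  obtain ⟨e, he, hωe⟩ := exists_atom hpt ω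
  exact ⟨e, ⟨he, ⟨ω, hωe, hω⟩⟩, hωe⟩

end Aux

/-- The upper GN-extension `U(C|D) = P((C|D)^*)` of a W-coherent lower
probability on `𝒜_C(pt)` to one additional conditional event `C|D` is W-coherent and
dominates every W-coherent extension of `P`: it is the upper extension of `P`. -/
theorem stmt_11 {Ω : Type*} [Nonempty Ω] (pt : Set (Set Ω)) (hpt : IsPartition pt)
    (P U : (Ω → ℝ) × Set Ω → ℝ)
    (hP : IsWCoherent (AC pt) P)
    (C D : Set Ω) (h1 : (C ∩ D).Nonempty) (h2 : (Cᶜ ∩ D).Nonempty)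
    (hnot : (ind C, D) ∉ AC pt)
    (hag : ∀ p ∈ AC pt, U p = P p)
    (hext : U (ind C, D) = P (outerCE pt C D)) :
    IsWCoherent (AC pt ∪ {(ind C, D)}) U ∧
    ∀ Q : (Ω → ℝ) × Set Ω → ℝ,
      IsWCoherent (AC pt ∪ {(ind C, D)}) Q → (∀ p ∈ AC pt, Q p = P p) →
      Q (ind C, D) ≤ U (ind C, D) := by
  classical
  -- notation
  set C' : Set Ω := outerE pt (C ∩ D) with hC'def
  set K : Set Ω := innerE pt (Cᶜ ∩ D) with hKdef
  set D' : Set Ω := C' ∪ K with hD'def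
  have hCsub : C ∩ D ⊆ C' := subset_outerE hpt (C ∩ D)
  have hD'ne : D'.Nonempty := ⟨h1.choose, Or.inl (hCsub h1.choose_spec)⟩
  have hDne : D.Nonempty := ⟨h1.choose, h1.choose_spec.2⟩
  have hACouter : (ind C', D') ∈ AC pt :=
    ⟨C', D', memA_outerE pt (C ∩ D), memA_union (memA_outerE pt (C ∩ D)) (memA_innerE pt (Cᶜ ∩ D)),
      hD'ne, rfl⟩
  have hu : U (ind C, D) = P (ind C', D') := hext
  -- pick a companion point in the same atom
  have pick : ∀ ω : Ω, ∃ ωt : Ω, (∀ A : Set Ω, memA pt A → (ω ∈ A ↔ ωt ∈ A)) ∧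
      (ωt ∈ D ↔ ω ∈ D') ∧ (ωt ∈ C ∩ D ↔ ω ∈ C' ∩ D') := by
    intro ω
    obtain ⟨e, he, hωe⟩ := exists_atom hpt ω
    by_cases hc : (e ∩ (C ∩ D)).Nonempty
    · obtain ⟨ωt, hωte, hωtCD⟩ := hc
      have hωC' : ω ∈ C' := (mem_outerE_iff hpt (C ∩ D) he hωe).mpr ⟨ωt, hωte, hωtCD⟩
      exact ⟨ωt, fun A hA => memA_mem_iff hpt hA he hωe hωte,
        iff_of_true hωtCD.2 (Or.inl hωC'), iff_of_true hωtCD ⟨hωC', Or.inl hωC'⟩⟩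
    · have hωC' : ω ∉ C' := fun h => hc ((mem_outerE_iff hpt (C ∩ D) he hωe).mp h)
      by_cases hd : e ⊆ D
      · have hsub : e ⊆ Cᶜ ∩ D := fun x hx => ⟨fun hxC => hc ⟨x, hx, hxC, hd hx⟩, hd hx⟩
        have hωK : ω ∈ K := (mem_innerE_iff hpt (Cᶜ ∩ D) he hωe).mpr hsub
        exact ⟨ω, fun A hA => Iff.rfl,
          iff_of_true (hd hωe) (Or.inr hωK),
          iff_of_false (fun h => (hsub hωe).1 h.1) (fun h => hωC' h.1)⟩
      · obtain ⟨ωt, hωte, hωtD⟩ := not_subset.mp hd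
        have hωK : ω ∉ K :=
          fun h => hd (fun x hx => ((mem_innerE_iff hpt (Cᶜ ∩ D) he hωe).mp h hx).2)
        exact ⟨ωt, fun A hA => memA_mem_iff hpt hA he hωe hωte,
          iff_of_false hωtD (fun h => h.elim hωC' hωK),
          iff_of_false (fun h => hωtD h.2) (fun h => hωC' h.1)⟩
  -- the replacement map
  set repl : ((Ω → ℝ) × Set Ω) → ((Ω → ℝ) × Set Ω) :=
    fun q => if q ∈ AC pt then q else (ind C', D') with hrepl_def
  have hreplAC : ∀ q, repl q ∈ AC pt := by
    intro q
    rw [hrepl_def]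
    by_cases h : q ∈ AC pt
    · simpa [h] using h
    · simpa [h] using hACouter
  -- key termwise lemma
  have hkey : ∀ (Y : Ω → ℝ) (E : Set Ω), (Y, E) ∈ AC pt ∪ {(ind C, D)} →
      ∀ ω ωt : Ω, (∀ A : Set Ω, memA pt A → (ω ∈ A ↔ ωt ∈ A)) →
      (ωt ∈ D ↔ ω ∈ D') → (ωt ∈ C ∩ D ↔ ω ∈ C' ∩ D') →
      gainTerm U Y E ωt = gainTerm P (repl (Y, E)).1 (repl (Y, E)).2 ω ∧
        (ω ∈ (repl (Y, E)).2 → ωt ∈ E) := by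
    rintro Y E (hAC | hsing) ω ωt hsat hiff1 hiff2
    · have hre : repl (Y, E) = (Y, E) := by rw [hrepl_def]; simp [hAC]
      rw [hre]
      obtain ⟨A, B, hA, hB, hBne, hYE⟩ := hAC
      have hY : Y = ind A := congrArg Prod.fst hYE
      have hE : E = B := congrArg Prod.snd hYE
      rw [hY, hE]
      show gainTerm U (ind A) B ωt = gainTerm P (ind A) B ω ∧ (ω ∈ B → ωt ∈ B)
      have hUP : U (ind A, B) = P (ind A, B) := hag _ ⟨A, B, hA, hB, hBne, rfl⟩
      constructor
      · rw [gainTerm_apply, gainTerm_apply, hUP]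
        have hindA : ind A ωt = ind A ω := by
          rw [ind_apply, ind_apply]
          by_cases h : ω ∈ A
          · rw [if_pos ((hsat A hA).mp h), if_pos h]
          · rw [if_neg (fun hh => h ((hsat A hA).mpr hh)), if_neg h]
        by_cases h : ω ∈ B
        · rw [if_pos ((hsat B hB).mp h), if_pos h, hindA]
        · rw [if_neg (fun hh => h ((hsat B hB).mpr hh)), if_neg h]
      · exact fun h => (hsat B hB).mp h
    · have hYE : (Y, E) = (ind C, D) := hsing
      have hY : Y = ind C := congrArg Prod.fst hYE
      have hE : E = D := congrArg Prod.snd hYE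
      have hre : repl (ind C, D) = (ind C', D') := by rw [hrepl_def]; simp [hnot]
      rw [hY, hE, hre]
      show gainTerm U (ind C) D ωt = gainTerm P (ind C') D' ω ∧ (ω ∈ D' → ωt ∈ D)
      constructor
      · rw [gainTerm_apply, gainTerm_apply, ← hu]
        by_cases h : ωt ∈ D
        · have hω : ω ∈ D' := hiff1.mp h
          rw [if_pos h, if_pos hω]
          have : ind C ωt = ind C' ω := by
            rw [ind_apply, ind_apply]
            by_cases hc : ωt ∈ C
            · rw [if_pos hc, if_pos (hiff2.mp ⟨hc, h⟩).1]
            · rw [if_neg hc, if_neg (fun hh => hc (hiff2.mpr ⟨hh, hω⟩).1)]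
          rw [this]
        · rw [if_neg h, if_neg (fun hh => h (hiff1.mpr hh))]
      · exact fun h => hiff1.mpr h
  constructor
  · -- Part 1 : coherence of U
    intro n X0 B0 X Bs s0 s hm0 hmi hs0 hsi
    choose ωt hsat hiff1 hiff2 using pick
    have hm0' : ((repl (X0, B0)).1, (repl (X0, B0)).2) ∈ AC pt := by
      rw [Prod.mk.eta]; exact hreplAC _
    have hmi' : ∀ i, ((repl (X i, Bs i)).1, (repl (X i, Bs i)).2) ∈ AC pt := by
      intro i; rw [Prod.mk.eta]; exact hreplAC _
    have h0 := hP n (repl (X0, B0)).1 (repl (X0, B0)).2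
      (fun i => (repl (X i, Bs i)).1) (fun i => (repl (X i, Bs i)).2) s0 s hm0' hmi' hs0 hsi
    refine le_trans h0 (csSup_le_csSup ?_ ?_ ?_)
    · -- BddAbove of the U-image
      have hind : ∀ i, ∃ A : Set Ω, X i = ind A := by
        intro i
        rcases hmi i with hAC | hsing
        · obtain ⟨A, B, _, _, _, hYE⟩ := hAC
          exact ⟨A, congrArg Prod.fst hYE⟩
        · exact ⟨C, congrArg Prod.fst (hsing : (X i, Bs i) = (ind C, D))⟩
      have hind0 : ∃ A : Set Ω, X0 = ind A := by
        rcases hm0 with hAC | hsing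
        · obtain ⟨A, B, _, _, _, hYE⟩ := hAC
          exact ⟨A, congrArg Prod.fst hYE⟩
        · exact ⟨C, congrArg Prod.fst (hsing : (X0, B0) = (ind C, D))⟩
      refine ⟨(∑ i, s i * (1 + |U (X i, Bs i)|)) + s0 * (1 + |U (X0, B0)|), ?_⟩
      rintro x ⟨ω, -, rfl⟩
      have hb : ∀ i ∈ Finset.univ, s i * gainTerm U (X i) (Bs i) ω ≤
          s i * (1 + |U (X i, Bs i)|) := by
        intro i _
        obtain ⟨A, hA⟩ := hind i
        have h1' : gainTerm U (X i) (Bs i) ω ≤ 1 + |U (X i, Bs i)| := by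
          refine le_trans (le_abs_self _) ?_
          rw [hA]; exact abs_gainTerm_le U A (Bs i) ω
        exact mul_le_mul_of_nonneg_left h1' (hsi i)
      have hsum := Finset.sum_le_sum hb
      have hb0 : -(s0 * gainTerm U X0 B0 ω) ≤ s0 * (1 + |U (X0, B0)|) := by
        obtain ⟨A, hA⟩ := hind0
        have h1' : -gainTerm U X0 B0 ω ≤ 1 + |U (X0, B0)| := by
          refine le_trans (neg_le_abs _) ?_
          rw [hA]; exact abs_gainTerm_le U A B0 ω
        calc -(s0 * gainTerm U X0 B0 ω) = s0 * (-gainTerm U X0 B0 ω) := by ring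
          _ ≤ s0 * (1 + |U (X0, B0)|) := mul_le_mul_of_nonneg_left h1' hs0
      simp only
      linarith
    · -- nonemptiness of the P-image
      obtain ⟨A, B, hA, hB, hBne, hqe⟩ := hreplAC (X0, B0)
      have : (repl (X0, B0)).2.Nonempty := by rw [hqe]; exact hBne
      exact (this.mono Set.subset_union_left).image _
    · -- the P-image is contained in the U-image
      rintro x ⟨ω, hω, rfl⟩
      refine ⟨ωt ω, ?_, ?_⟩
      · rcases hω with hω | hω
        · exact Or.inl ((hkey X0 B0 hm0 ω (ωt ω) (hsat ω) (hiff1 ω) (hiff2 ω)).2 hω)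
        · obtain ⟨i, hi⟩ := Set.mem_iUnion.mp hω
          exact Or.inr (Set.mem_iUnion.mpr
            ⟨i, (hkey (X i) (Bs i) (hmi i) ω (ωt ω) (hsat ω) (hiff1 ω) (hiff2 ω)).2 hi⟩)
      · simp only
        have ht0 := (hkey X0 B0 hm0 ω (ωt ω) (hsat ω) (hiff1 ω) (hiff2 ω)).1
        have hti : ∀ i, gainTerm U (X i) (Bs i) (ωt ω) =
            gainTerm P (repl (X i, Bs i)).1 (repl (X i, Bs i)).2 ω :=
          fun i => (hkey (X i) (Bs i) (hmi i) ω (ωt ω) (hsat ω) (hiff1 ω) (hiff2 ω)).1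
        rw [ht0]
        congr 1
        exact Finset.sum_congr rfl (fun i _ => by rw [hti i])
  · -- Part 2 : maximality
    intro Q hQ hagQ
    by_contra hlt
    push_neg at hlt
    have hu' : Q (ind C', D') = U (ind C, D) := by rw [hagQ _ hACouter]; exact hu.symm
    set q : ℝ := Q (ind C, D) with hqdef
    set u' : ℝ := Q (ind C', D') with hu'def
    have hltq : u' < q := by rw [hu']; exact hlt
    have hmemCD : (ind C, D) ∈ AC pt ∪ {(ind C, D)} := Or.inr rfl
    have hmemO : (ind C', D') ∈ AC pt ∪ {(ind C, D)} := Or.inl hACouter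
    -- (a) 0 ≤ u'
    have ha : 0 ≤ u' := by
      have h0 := hQ 0 (ind C') D' (fun i => i.elim0) (fun i => i.elim0) 1 (fun i => i.elim0)
        hmemO (fun i => i.elim0) zero_le_one (fun i => i.elim0)
      have hle : sSup ((fun ω => (∑ i : Fin 0, (i.elim0 : ℝ) *
          gainTerm Q (i.elim0 : Ω → ℝ) (i.elim0 : Set Ω) ω) -
          1 * gainTerm Q (ind C') D' ω) '' (D' ∪ ⋃ i : Fin 0, (i.elim0 : Set Ω))) ≤ u' := by
        refine csSup_le ?_ ?_
        · refine (hD'ne.mono ?_).image _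
          exact Set.subset_union_left
        · rintro x ⟨ω, hω, rfl⟩
          simp only [Finset.univ_eq_empty, Finset.sum_empty, zero_sub, one_mul]
          have hωD' : ω ∈ D' := by
            rcases hω with h | h
            · exact h
            · exact absurd h (by simp)
          rw [gainTerm_apply, if_pos hωD', ind_apply, ← hu'def]
          split <;> linarith
      linarith
    -- (b) q ≤ 1
    have hb : q ≤ 1 := by
      have h0 := hQ 1 (ind C) D (fun _ => ind C) (fun _ => D) 0 (fun _ => 1)
        hmemCD (fun _ => hmemCD) le_rfl (fun _ => zero_le_one)
      have hle : sSup ((fun ω => (∑ _i : Fin 1, (1 : ℝ) * gainTerm Q (ind C) D ω) -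
          0 * gainTerm Q (ind C) D ω) '' (D ∪ ⋃ _i : Fin 1, D)) ≤ 1 - q := by
        refine csSup_le ((hDne.mono Set.subset_union_left).image _) ?_
        rintro x ⟨ω, hω, rfl⟩
        simp only [Fin.sum_univ_one, one_mul, zero_mul, sub_zero]
        have hωD : ω ∈ D := by
          rcases hω with h | h
          · exact h
          · simpa using h
        rw [gainTerm_apply, if_pos hωD, ind_apply, ← hqdef]
        split <;> linarith
      linarith
    -- (c) the contradiction
    have h0 := hQ 1 (ind C') D' (fun _ => ind C) (fun _ => D) 1 (fun _ => 1)
      hmemO (fun _ => hmemCD) zero_le_one (fun _ => zero_le_one)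
    have hle : sSup ((fun ω => (∑ _i : Fin 1, (1 : ℝ) * gainTerm Q (ind C) D ω) -
        1 * gainTerm Q (ind C') D' ω) '' (D' ∪ ⋃ _i : Fin 1, D)) ≤
        max (u' - q) (u' - 1) := by
      refine csSup_le ?_ ?_
      · refine (hDne.mono ?_).image _
        intro x hx; exact Or.inr (Set.mem_iUnion.mpr ⟨0, hx⟩)
      · rintro x ⟨ω, hω, rfl⟩
        simp only [Fin.sum_univ_one, one_mul]
        rw [gainTerm_apply, gainTerm_apply, ← hqdef, ← hu'def]
        by_cases hD : ω ∈ D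
        · have hωD' : ω ∈ D' ∨ ω ∉ D' := em _
          rcases hωD' with hD' | hD'
          · rw [if_pos hD, if_pos hD', ind_apply, ind_apply]
            by_cases hc : ω ∈ C
            · have : ω ∈ C' := hCsub ⟨hc, hD⟩
              rw [if_pos hc, if_pos this]
              exact le_max_of_le_left (by linarith)
            · rw [if_neg hc]
              split
              · exact le_max_of_le_left (by linarith)
              · exact le_max_of_le_left (by linarith)
          · rw [if_pos hD, if_neg hD', ind_apply]
            have hc : ω ∉ C := fun hc => hD' (Or.inl (hCsub ⟨hc, hD⟩))
            rw [if_neg hc]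
            exact le_max_of_le_left (by linarith)
        · have hωD' : ω ∈ D' := by
            rcases hω with h | h
            · exact h
            · exact absurd (by simpa using h) hD
          rw [if_neg hD, if_pos hωD', ind_apply]
          have hc : ω ∈ C' := by
            rcases hωD' with h | h
            · exact h
            · exact absurd (innerE_subset pt (Cᶜ ∩ D) h).2 hD
          rw [if_pos hc]
          exact le_max_of_le_right (by linarith)
    have hmax : max (u' - q) (u' - 1) < 0 := max_lt (by linarith) (by linarith)
    linarith
end

section
/- Let A, B₀, B₁ be events with ∅ ≠ B₁ ⊆ B₀. Then A|B₁ ≤_GN A|B₀ if and only if Aᶜ ∩ B₀ ∩ B₁ᶜ = ∅. -/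
open Set

/-- For `∅ ≠ B₁ ⊆ B₀`, `A|B₁ ≤GN A|B₀` iff `Aᶜ ∩ B₀ ∩ B₁ᶜ = ∅`. -/
theorem stmt_14 {Ω : Type*} [Nonempty Ω] (A B0 B1 : Set Ω)
    (hB1 : B1.Nonempty) (hsub : B1 ⊆ B0) :
    GNe A B1 A B0 ↔ Aᶜ ∩ B0 ∩ B1ᶜ = ∅ := by
  constructor
  · rintro ⟨-, h2⟩
    ext ω
    simp only [Set.mem_inter_iff, Set.mem_compl_iff, Set.mem_empty_iff_false, iff_false]
    rintro ⟨⟨hA, hB0⟩, hB1'⟩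
    exact hB1' (h2 ⟨hA, hB0⟩).2
  · intro h
    refine ⟨fun ω ⟨hA, hB⟩ => ⟨hA, hsub hB⟩, fun ω ⟨hA, hB0⟩ => ⟨hA, ?_⟩⟩
    by_contra hB1'
    exact absurd (h ▸ (⟨⟨hA, hB0⟩, hB1'⟩ : ω ∈ Aᶜ ∩ B0 ∩ B1ᶜ)) (Set.notMem_empty ω)
end

section
/- Let A, B₀, B₁ be events with ∅ ≠ B₁ ⊆ B₀, and let μ̲ be a C-convex lower probability on a set of conditional events containing (A∩B₁)|B₀ and A|B₁. Then μ̲(A∩B₁|B₀) ≤ μ̲(A|B₁). -/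
open Set

lemma cconvex_ind_nonneg {Ω : Type*} (S : Set ((Ω → ℝ) × Set Ω))
    (μ : (Ω → ℝ) × Set Ω → ℝ) (hμ : IsCConvexLP S μ) (E B : Set Ω) (hB : B.Nonempty)
    (hmem : (ind E, B) ∈ S) : 0 ≤ μ (ind E, B) := by
  obtain ⟨hconv, hcent⟩ := hμ
  obtain ⟨hz, hz0⟩ := hcent (ind E) B hmem
  have key := hconv 1 le_rfl (ind E) B (fun _ _ => 0) (fun _ => B) 1 (fun _ => 1)
      hmem (fun _ => hz) (fun _ => zero_le_one) (by simp) one_pos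
  refine le_trans key (csSup_le ?_ ?_)
  · obtain ⟨ω, hω⟩ := hB
    exact ⟨_, ⟨ω, Or.inl hω, rfl⟩⟩
  · rintro x ⟨ω, hω, rfl⟩
    have hωB : ω ∈ B := by
      rcases hω with h | h
      · exact h
      · simpa using h
    simp only [Fin.sum_univ_one, gainTerm, hz0, one_mul,
      Set.indicator_of_mem hωB, sub_zero, zero_sub]
    have : (0:ℝ) ≤ ind E ω := Set.indicator_nonneg (fun _ _ => zero_le_one) ω
    linarith

/-- For `∅ ≠ B₁ ⊆ B₀` and a C-convex lower probability `μ` whose domain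
contains `(A ∩ B₁)|B₀` and `A|B₁`, one has `μ(A ∩ B₁|B₀) ≤ μ(A|B₁)`. -/
theorem stmt_15 {Ω : Type*} [Nonempty Ω] (A B0 B1 : Set Ω)
    (hB1 : B1.Nonempty) (hsub : B1 ⊆ B0)
    (S : Set ((Ω → ℝ) × Set Ω)) (hS : IsCondEventSet S)
    (μ : (Ω → ℝ) × Set Ω → ℝ) (hμ : IsCConvexLP S μ)
    (h1 : (ind (A ∩ B1), B0) ∈ S) (h2 : (ind A, B1) ∈ S) :
    μ (ind (A ∩ B1), B0) ≤ μ (ind A, B1) := by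
  have hB0 : B0.Nonempty := hB1.mono hsub
  have ha0 : 0 ≤ μ (ind A, B1) := cconvex_ind_nonneg S μ hμ A B1 hB1 h2
  obtain ⟨hconv, _⟩ := hμ
  have key := hconv 1 le_rfl (ind A) B1 (fun _ => ind (A ∩ B1)) (fun _ => B0) 1 (fun _ => 1)
      h2 (fun _ => h1) (fun _ => zero_le_one) (by simp) one_pos
  have hle : sSup ((fun ω => (∑ i : Fin 1, (1:ℝ) * gainTerm μ (ind (A ∩ B1)) B0 ω)
        - 1 * gainTerm μ (ind A) B1 ω) '' (B1 ∪ ⋃ _ : Fin 1, B0))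
      ≤ μ (ind A, B1) - μ (ind (A ∩ B1), B0) := by
    refine csSup_le ?_ ?_
    · obtain ⟨ω, hω⟩ := hB1
      exact ⟨_, ⟨ω, Or.inl hω, rfl⟩⟩
    · rintro x ⟨ω, hω, rfl⟩
      have hωB0 : ω ∈ B0 := by
        rcases hω with h | h
        · exact hsub h
        · simpa using h
      simp only [Fin.sum_univ_one, gainTerm, one_mul, Set.indicator_of_mem hωB0]
      by_cases hωB1 : ω ∈ B1
      · have hind : ind (A ∩ B1) ω = ind A ω := by
          by_cases hA : ω ∈ A
          · simp [ind, Set.indicator_of_mem, hA, hωB1, Set.mem_inter hA hωB1]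
          · have : ω ∉ A ∩ B1 := fun h => hA h.1
            simp [ind, Set.indicator_of_notMem, hA, this]
        rw [Set.indicator_of_mem hωB1, hind]
        ring_nf
        linarith
      · have hind : ind (A ∩ B1) ω = 0 := by
          have : ω ∉ A ∩ B1 := fun h => hωB1 h.2
          simp [ind, Set.indicator_of_notMem, this]
        rw [Set.indicator_of_notMem hωB1, hind]
        have : (0:ℝ) ≤ ind A ω := Set.indicator_nonneg (fun _ _ => zero_le_one) ω
        linarith
  linarith [le_trans key hle]
end

section
/- Let A|B and C|D be conditional events with A|B ≤_GN C|D, and let P be a dF-coherent conditional prevision on a set of conditional events containing (A∩D)|B and (C∩D)|B. Then P(A∩D|B) ≤ P(C∩D|B). -/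
open Set

/-- If `A|B ≤GN C|D` and `P` is a dF-coherent conditional prevision on a set
containing `(A∩D)|B` and `(C∩D)|B`, then `P(A∩D|B) ≤ P(C∩D|B)`. -/
theorem stmt_17 {Ω : Type*} [Nonempty Ω] (A B C D : Set Ω)
    (hB : B.Nonempty) (hD : D.Nonempty)
    (hGN : GNe A B C D)
    (S : Set ((Ω → ℝ) × Set Ω))
    (P : (Ω → ℝ) × Set Ω → ℝ) (hP : IsdFCoherent S P)
    (h1 : (ind (A ∩ D), B) ∈ S) (h2 : (ind (C ∩ D), B) ∈ S) :
    P (ind (A ∩ D), B) ≤ P (ind (C ∩ D), B) := by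
  set p := P (ind (A ∩ D), B)
  set q := P (ind (C ∩ D), B)
  have key := hP 2 (by norm_num) ![ind (A ∩ D), ind (C ∩ D)] ![B, B] ![1, -1]
    (by intro i; fin_cases i <;> simpa using ‹_›)
  have hU : (⋃ i : Fin 2, (![B, B] : Fin 2 → Set Ω) i) = B := by
    ext ω; simp [Fin.exists_fin_two]
  rw [hU] at key
  simp only [Fin.sum_univ_two, Matrix.cons_val_zero, Matrix.cons_val_one, Matrix.head_cons,
    one_mul, neg_one_mul] at key
  -- pointwise bound on the gain over B
  have hbound : ∀ ω ∈ B,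
      gainTerm P (ind (A ∩ D)) B ω + -gainTerm P (ind (C ∩ D)) B ω ≤ q - p := by
    intro ω hω
    have hAC : ind (A ∩ D) ω ≤ ind (C ∩ D) ω := by
      by_cases hA : ω ∈ A ∩ D
      · have hC : ω ∈ C ∩ D := hGN.1 ⟨hA.1, hω⟩
        simp [ind, Set.indicator_of_mem, hA, hC]
      · have : ind (A ∩ D) ω = 0 := Set.indicator_of_notMem hA _
        rw [this]
        by_cases hC : ω ∈ C ∩ D
        · simp [ind, Set.indicator_of_mem, hC]
        · simp [ind, Set.indicator_of_notMem hC]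
    simp only [gainTerm, Set.indicator_of_mem hω]
    linarith
  have hle : sSup ((fun ω => gainTerm P (ind (A ∩ D)) B ω + -gainTerm P (ind (C ∩ D)) B ω) '' B)
      ≤ q - p := by
    apply csSup_le (hB.image _)
    rintro x ⟨ω, hω, rfl⟩
    exact hbound ω hω
  linarith [key, hle]
end

section
/- Let X : Ω → ℝ be a bounded gamble and let B₀, B₁ be events with ∅ ≠ B₁ ⊆ B₀ and B₀ ∩ B₁ᶜ ≠ ∅. Then (1_{B₁}·X)|B₀ ≤_GN X|B₁ (Goodman–Nguyen relation for conditional gambles) if and only if inf_{B₁} X ≥ 0, where inf_{B₁} X = inf{X(ω) : ω ∈ B₁}. -/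
open Set

/-- For a bounded gamble `X` and `∅ ≠ B₁ ⊆ B₀` with `B₀ ∩ B₁ᶜ ≠ ∅`,
`(1_{B₁}·X)|B₀ ≤GN X|B₁` iff `inf_{B₁} X ≥ 0`. -/
theorem stmt_18 {Ω : Type*} [Nonempty Ω] (X : Ω → ℝ) (hX : Bdd X)
    (B0 B1 : Set Ω) (hB1 : B1.Nonempty) (hsub : B1 ⊆ B0)
    (hne : (B0 ∩ B1ᶜ).Nonempty) :
    GNg (fun ω => ind B1 ω * X ω) B0 X B1 ↔ 0 ≤ sInf (X '' B1) := by
  constructor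
  · intro h
    obtain ⟨ω, hω0, hω1⟩ := hne
    have H := h ω
    have e0 : ind B0 ω = 1 := Set.indicator_of_mem hω0 1
    have e1 : ind B1 ω = 0 := Set.indicator_of_notMem hω1 1
    have e2 : ind (B0ᶜ ∩ B1) ω = 0 :=
      Set.indicator_of_notMem (fun hm => hm.1 hω0) 1
    have e3 : ind (B0 ∩ B1ᶜ) ω = 1 := Set.indicator_of_mem (Set.mem_inter hω0 hω1) 1
    simp only [e0, e1, e2, e3] at H
    simpa using H
  · intro h ω
    by_cases h1 : ω ∈ B1
    · have e0 : ind B0 ω = 1 := Set.indicator_of_mem (hsub h1) 1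
      have e1 : ind B1 ω = 1 := Set.indicator_of_mem h1 1
      have e2 : ind (B0ᶜ ∩ B1) ω = 0 :=
        Set.indicator_of_notMem (fun hm => hm.1 (hsub h1)) 1
      have e3 : ind (B0 ∩ B1ᶜ) ω = 0 :=
        Set.indicator_of_notMem (fun hm => hm.2 h1) 1
      simp only [e0, e1, e2, e3]
      simp
    · have e1 : ind B1 ω = 0 := Set.indicator_of_notMem h1 1
      have e2 : ind (B0ᶜ ∩ B1) ω = 0 :=
        Set.indicator_of_notMem (fun hm => h1 hm.2) 1
      by_cases h0 : ω ∈ B0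
      · have e0 : ind B0 ω = 1 := Set.indicator_of_mem h0 1
        have e3 : ind (B0 ∩ B1ᶜ) ω = 1 := Set.indicator_of_mem (Set.mem_inter h0 h1) 1
        simp only [e0, e1, e2, e3]
        simpa using h
      · have e0 : ind B0 ω = 0 := Set.indicator_of_notMem h0 1
        have e3 : ind (B0 ∩ B1ᶜ) ω = 0 :=
          Set.indicator_of_notMem (fun hm => h0 hm.1) 1
        simp only [e0, e1, e2, e3]
        simp
end

section
/- Let X : Ω → ℝ be a bounded gamble and let B₀, B₁ be events with ∅ ≠ B₁ ⊆ B₀ and B₀ ∩ B₁ᶜ ≠ ∅. Then X|B₁ ≤_GN (1_{B₁}·X)|B₀ (Goodman–Nguyen relation for conditional gambles) if and only if sup_{B₁} X ≤ 0, where sup_{B₁} X = sup{X(ω) : ω ∈ B₁}. -/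
open Set

/-- For a bounded gamble `X` and `∅ ≠ B₁ ⊆ B₀` with `B₀ ∩ B₁ᶜ ≠ ∅`,
`X|B₁ ≤GN (1_{B₁}·X)|B₀` iff `sup_{B₁} X ≤ 0`. -/
theorem stmt_19 {Ω : Type*} [Nonempty Ω] (X : Ω → ℝ) (hX : Bdd X)
    (B0 B1 : Set Ω) (hB1 : B1.Nonempty) (hsub : B1 ⊆ B0)
    (hne : (B0 ∩ B1ᶜ).Nonempty) :
    GNg X B1 (fun ω => ind B1 ω * X ω) B0 ↔ sSup (X '' B1) ≤ 0 := by
  constructor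
  · intro h
    obtain ⟨ω, hω0, hω1⟩ := hne
    have := h ω
    simp only [ind, indicator] at this
    rw [if_neg hω1, if_pos (show ω ∈ B1ᶜ ∩ B0 from ⟨hω1, hω0⟩), if_pos hω0,
      if_neg (show ω ∉ B1 ∩ B0ᶜ from fun hh => hω1 hh.1)] at this
    simp only [Pi.one_apply, one_mul, zero_mul, mul_zero, zero_add, add_zero] at this
    linarith
  · intro hs ω
    simp only [ind, indicator]
    by_cases h1 : ω ∈ B1
    · have h0 : ω ∈ B0 := hsub h1
      rw [if_pos h1, if_neg (show ω ∉ B1ᶜ ∩ B0 from fun hh => hh.1 h1), if_pos h0,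
        if_neg (show ω ∉ B1 ∩ B0ᶜ from fun hh => hh.2 h0)]
      simp
    · rw [if_neg h1, if_neg (show ω ∉ B1 ∩ B0ᶜ from fun hh => h1 hh.1)]
      by_cases h0 : ω ∈ B0
      · rw [if_pos (show ω ∈ B1ᶜ ∩ B0 from ⟨h1, h0⟩), if_pos h0]
        simp only [Pi.one_apply, one_mul, zero_mul, add_zero, mul_zero, zero_add]
        linarith
      · rw [if_neg (show ω ∉ B1ᶜ ∩ B0 from fun hh => h0 hh.2), if_neg h0]
        simp
end
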